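/- Fix 𝔠 > 0, K ≥ 1 and let H be a differentiable function on [0,∞) with H(y) ≥ 1 for all y ≥ 0 and |H(y)|, |H'(y)| ≤ K for y ∈ [0, 2𝔠]. There exists a constant C, depending only on 𝔠 and K, such that for all integers N ≥ 2, all μ ≥ 0, all integers n ≥ 1 and all k_{1:n} ∈ (ℤ²∖{0})ⁿ, ∫_{ℝ²} (𝒦^N_{xN, k_1−xN})² · | 1/(μ_N + Γ(x)·H(L^N(N²Γ_1(x)))) − 1/(Γ_1(x)·H(L^N(N²Γ_1(x)))) | dx ≤ C. -/

import Mathlib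

/-!
Write `A = μ_N` and `h = H(L^N(N² Γ₁(x))) ≥ 1` (as `L^N ≥ 0`). The difference of the two
reciprocals is `A (h - 1) / ((A + Γ h)(A + Γ) h) ≤ A / (A + Γ)²`, and `Γ(x) ≥ |x|²/2`,
`(𝒦^N)² ≤ 1`. So the integrand is at most `A / (A + |x|²/2)²`, whose integral over `ℝ²` does
not depend on `A > 0` (substitute `x = √(2A) y`): it equals `2 ∫ (1 + |y|²)⁻²`.
-/

/-- Embedding of the lattice `ℤ²` into `ℝ²`. -/
def latR (l : ℤ × ℤ) : ℝ × ℝ := ((l.1 : ℝ), (l.2 : ℝ))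

/-- Squared Euclidean norm `|ℓ|²` of a lattice point. -/
noncomputable def nsq (l : ℤ × ℤ) : ℝ := (l.1 : ℝ) ^ 2 + (l.2 : ℝ) ^ 2

/-- Squared Euclidean norm `|x|²` on `ℝ²`. -/
noncomputable def rnsq (x : ℝ × ℝ) : ℝ := x.1 ^ 2 + x.2 ^ 2

/-- `c(x,y) = x₂ y₂ − x₁ y₁`. -/
noncomputable def cfun (x y : ℝ × ℝ) : ℝ := x.2 * y.2 - x.1 * y.1

open Classical in
/-- The kernel `𝒦^N_{x,y} = (1/2π) · c(x,y)/(|x||y|) · 1_{1 ≤ |x| ≤ N, 1 ≤ |y| ≤ N, |x+y| ≤ N}`,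
vanishing if `x = 0` or `y = 0`. -/
noncomputable def Kker (N : ℕ) (x y : ℝ × ℝ) : ℝ :=
  if x ≠ 0 ∧ y ≠ 0 ∧ 1 ≤ Real.sqrt (rnsq x) ∧ Real.sqrt (rnsq x) ≤ N ∧
      1 ≤ Real.sqrt (rnsq y) ∧ Real.sqrt (rnsq y) ≤ N ∧ Real.sqrt (rnsq (x + y)) ≤ N then
    (1 / (2 * Real.pi)) * (cfun x y / (Real.sqrt (rnsq x) * Real.sqrt (rnsq y)))
  else 0

/-- `L^N(x) = (𝔠 / log(N²)) · log(1 + N²/x)`. -/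
noncomputable def LN (c : ℝ) (N : ℕ) (x : ℝ) : ℝ :=
  c / Real.log ((N : ℝ) ^ 2) * Real.log (1 + (N : ℝ) ^ 2 / x)

/-- `Γ(x) = ½ (|x|² + |k₁/N − x|² + β_N)` with `β_N = tail/N²`. -/
noncomputable def Gam (N : ℕ) (k1 : ℤ × ℤ) (tail : ℝ) (x : ℝ × ℝ) : ℝ :=
  (rnsq x + rnsq (((N : ℝ))⁻¹ • latR k1 - x) + tail / (N : ℝ) ^ 2) / 2

/-- `Γ₁(x) = μ_N + Γ(x)` with `μ_N = μ/N²`. -/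
noncomputable def Gam1 (N : ℕ) (μ : ℝ) (k1 : ℤ × ℤ) (tail : ℝ) (x : ℝ × ℝ) : ℝ :=
  μ / (N : ℝ) ^ 2 + Gam N k1 tail x

open MeasureTheory

lemma rnsq_nonneg (x : ℝ × ℝ) : 0 ≤ rnsq x := by unfold rnsq; positivity

lemma rnsq_smul (r : ℝ) (x : ℝ × ℝ) : rnsq (r • x) = r ^ 2 * rnsq x := by
  simp only [rnsq, Prod.smul_fst, Prod.smul_snd, smul_eq_mul]; ring

lemma sq_norm_le_rnsq (x : ℝ × ℝ) : ‖x‖ ^ 2 ≤ rnsq x := by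
  rw [Prod.norm_def, Real.norm_eq_abs, Real.norm_eq_abs, rnsq]
  rcases max_cases |x.1| |x.2| with ⟨h, _⟩ | ⟨h, _⟩ <;> rw [h, sq_abs] <;>
    linarith [sq_nonneg x.1, sq_nonneg x.2]

lemma abs_cfun_le (x y : ℝ × ℝ) : |cfun x y| ≤ √(rnsq x) * √(rnsq y) := by
  rw [← Real.sqrt_mul (rnsq_nonneg x), ← Real.sqrt_sq_eq_abs]
  refine Real.sqrt_le_sqrt ?_
  unfold cfun rnsq
  nlinarith [sq_nonneg (x.1 * y.2 + x.2 * y.1)]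

lemma Kker_sq_le_one (N : ℕ) (x y : ℝ × ℝ) : Kker N x y ^ 2 ≤ 1 := by
  rw [sq_le_one_iff_abs_le_one]
  unfold Kker
  split_ifs with h
  · obtain ⟨-, -, hx, -, hy, -, -⟩ := h
    have hxy : 0 < √(rnsq x) * √(rnsq y) := by positivity
    have hpi : 1 / (2 * Real.pi) ≤ 1 := by
      rw [div_le_one (by positivity)]; linarith [Real.pi_gt_three]
    rw [abs_mul, abs_of_pos (by positivity : 0 < 1 / (2 * Real.pi)), abs_div, abs_of_pos hxy]
    exact mul_le_one₀ hpi (by positivity) ((div_le_one hxy).2 (abs_cfun_le x y))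
  · simp

lemma LN_nonneg {c : ℝ} (hc : 0 ≤ c) (N : ℕ) {w : ℝ} (hw : 0 ≤ w) : 0 ≤ LN c N w := by
  unfold LN
  have hN : 0 ≤ Real.log ((N : ℝ) ^ 2) := by
    rw [Real.log_pow]
    exact mul_nonneg (Nat.cast_nonneg 2) (Real.log_natCast_nonneg N)
  have hlog : 0 ≤ Real.log (1 + (N : ℝ) ^ 2 / w) :=
    Real.log_nonneg (le_add_of_nonneg_right (by positivity))
  positivity

lemma half_rnsq_le_Gam (N : ℕ) (k1 : ℤ × ℤ) {T : ℝ} (hT : 0 ≤ T) (x : ℝ × ℝ) :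
    rnsq x / 2 ≤ Gam N k1 T x := by
  unfold Gam
  have : 0 ≤ T / (N : ℝ) ^ 2 := by positivity
  linarith [rnsq_nonneg ((N : ℝ)⁻¹ • latR k1 - x)]

lemma abs_one_div_sub_one_div_le {A G S h : ℝ} (hA : 0 ≤ A) (hS : 0 ≤ S) (hSG : S ≤ G)
    (hh : 1 ≤ h) : |1 / (A + G * h) - 1 / ((A + G) * h)| ≤ A / (A + S) ^ 2 := by
  rcases (add_nonneg hA hS).eq_or_lt with hAS | hAS
  · have hA0 : A = 0 := by linarith
    simp [hA0]
  have hh0 : 0 < h := by linarith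
  have hAGh : A + G ≤ A + G * h := by nlinarith
  have hAG : 0 < A + G := by linarith
  have hAGh0 : 0 < A + G * h := by linarith
  have hdiff : 1 / (A + G * h) - 1 / ((A + G) * h)
      = A * (h - 1) / ((A + G * h) * ((A + G) * h)) := by
    field_simp
    ring
  rw [hdiff, abs_of_nonneg (div_nonneg (by nlinarith) (by positivity)),
    div_le_div_iff₀ (by positivity) (by positivity)]
  calc A * (h - 1) * (A + S) ^ 2 ≤ A * h * (A + G) ^ 2 := by
        gcongr
        linarith
    _ ≤ A * ((A + G * h) * ((A + G) * h)) := by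
      have := mul_le_mul_of_nonneg_right hAGh (by positivity : 0 ≤ (A + G) * h)
      nlinarith

lemma integrable_inv_one_add_rnsq_sq : Integrable fun x : ℝ × ℝ => ((1 + rnsq x) ^ 2)⁻¹ := by
  have hdim : (Module.finrank ℝ (ℝ × ℝ) : ℝ) < 4 := by simp [Module.finrank_prod]; norm_num
  refine (integrable_rpow_neg_one_add_norm_sq (μ := volume) hdim).mono' ?_ ?_
  · exact (Continuous.inv₀ (by unfold rnsq; fun_prop)
      fun x => by positivity [rnsq_nonneg x]).aestronglyMeasurable
  · refine Filter.Eventually.of_forall fun x => ?_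
    have hx := sq_norm_le_rnsq x
    rw [Real.norm_of_nonneg (by positivity [rnsq_nonneg x]),
      show -(4 : ℝ) / 2 = -(2 : ℕ) by norm_num, Real.rpow_neg (by positivity), Real.rpow_natCast]
    gcongr

lemma div_add_half_rnsq_sq_eq {A : ℝ} (hA : 0 < A) (x : ℝ × ℝ) :
    A / (A + rnsq x / 2) ^ 2 = A⁻¹ * ((1 + rnsq ((√(2 * A))⁻¹ • x)) ^ 2)⁻¹ := by
  rw [rnsq_smul, inv_pow, Real.sq_sqrt (by positivity)]
  have : 0 < A + rnsq x / 2 := by positivity [rnsq_nonneg x]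
  field_simp

lemma integrable_div_add_half_rnsq_sq {A : ℝ} (hA : 0 ≤ A) :
    Integrable fun x : ℝ × ℝ => A / (A + rnsq x / 2) ^ 2 := by
  rcases hA.eq_or_lt with rfl | hA
  · simp
  simp_rw [div_add_half_rnsq_sq_eq hA]
  exact (integrable_inv_one_add_rnsq_sq.comp_smul (by positivity)).const_mul _

lemma integral_div_add_half_rnsq_sq_le {A : ℝ} (hA : 0 ≤ A) :
    ∫ x : ℝ × ℝ, A / (A + rnsq x / 2) ^ 2 ≤ 2 * ∫ x : ℝ × ℝ, ((1 + rnsq x) ^ 2)⁻¹ := by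
  rcases hA.eq_or_lt with rfl | hA
  · simp only [zero_div, integral_zero]
    exact mul_nonneg zero_le_two (integral_nonneg fun x => by positivity [rnsq_nonneg x])
  simp_rw [div_add_half_rnsq_sq_eq hA]
  rw [integral_const_mul, Measure.integral_comp_inv_smul volume (fun y => ((1 + rnsq y) ^ 2)⁻¹),
    Module.finrank_prod, Module.finrank_self, Real.sq_sqrt (by positivity), smul_eq_mul,
    abs_of_pos (by positivity), ← mul_assoc, mul_left_comm, inv_mul_cancel₀ hA.ne', mul_one]

lemma Kker_sq_mul_abs_sub_le {c : ℝ} (hc : 0 ≤ c) {H : ℝ → ℝ} (hH : ∀ y, 0 ≤ y → 1 ≤ H y)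
    (N : ℕ) {μ : ℝ} (hμ : 0 ≤ μ) (k1 : ℤ × ℤ) {T : ℝ} (hT : 0 ≤ T) (y z x : ℝ × ℝ) :
    Kker N y z ^ 2 *
        |1 / (μ / (N : ℝ) ^ 2 + Gam N k1 T x * H (LN c N ((N : ℝ) ^ 2 * Gam1 N μ k1 T x))) -
          1 / (Gam1 N μ k1 T x * H (LN c N ((N : ℝ) ^ 2 * Gam1 N μ k1 T x)))| ≤
      μ / (N : ℝ) ^ 2 / (μ / (N : ℝ) ^ 2 + rnsq x / 2) ^ 2 := by
  have hA : 0 ≤ μ / (N : ℝ) ^ 2 := by positivity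
  have hΓ := half_rnsq_le_Gam N k1 hT x
  have hx : 0 ≤ rnsq x / 2 := by positivity [rnsq_nonneg x]
  have hw : 0 ≤ (N : ℝ) ^ 2 * Gam1 N μ k1 T x :=
    mul_nonneg (sq_nonneg _) (add_nonneg hA (hx.trans hΓ))
  have hh := hH _ (LN_nonneg hc N hw)
  exact (mul_le_of_le_one_left (abs_nonneg _) (Kker_sq_le_one N y z)).trans
    (abs_one_div_sub_one_div_le hA hx hΓ hh)

theorem stmt10_general (c K : ℝ) (hc : 0 < c) :
    ∃ C : ℝ, ∀ H : ℝ → ℝ,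
      (∀ y : ℝ, 0 ≤ y → 1 ≤ H y) →
      (∀ y ∈ Set.Ici (0:ℝ), DifferentiableWithinAt ℝ H (Set.Ici 0) y) →
      (∀ y ∈ Set.Icc (0:ℝ) (2 * c),
        |H y| ≤ K ∧ |derivWithin H (Set.Ici 0) y| ≤ K) →
      ∀ N : ℕ, 2 ≤ N → ∀ μ : ℝ, 0 ≤ μ →
      ∀ (n : ℕ) (k : Fin (n + 1) → ℤ × ℤ), (∀ i, k i ≠ 0) →
        (∫ x : ℝ × ℝ,
            (Kker N ((N : ℝ) • x) (latR (k 0) - (N : ℝ) • x)) ^ 2 *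
              |1 / (μ / (N : ℝ) ^ 2 +
                    Gam N (k 0) (∑ i, nsq (k i) - nsq (k 0)) x *
                      H (LN c N ((N : ℝ) ^ 2 *
                        Gam1 N μ (k 0) (∑ i, nsq (k i) - nsq (k 0)) x))) -
                1 / (Gam1 N μ (k 0) (∑ i, nsq (k i) - nsq (k 0)) x *
                      H (LN c N ((N : ℝ) ^ 2 *
                        Gam1 N μ (k 0) (∑ i, nsq (k i) - nsq (k 0)) x)))|) ≤ C := by
  refine ⟨2 * ∫ x : ℝ × ℝ, ((1 + rnsq x) ^ 2)⁻¹, ?_⟩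
  intro H hH _ _ N _ μ hμ n k _
  have hA : 0 ≤ μ / (N : ℝ) ^ 2 := by positivity
  have htail : 0 ≤ ∑ i, nsq (k i) - nsq (k 0) :=
    sub_nonneg.2 <| Finset.single_le_sum (f := fun i => nsq (k i))
      (fun i _ => add_nonneg (sq_nonneg _) (sq_nonneg _)) (Finset.mem_univ 0)
  refine le_trans (integral_mono_of_nonneg (Filter.Eventually.of_forall fun x => by positivity)
    (integrable_div_add_half_rnsq_sq hA) (Filter.Eventually.of_forall fun x => ?_))
    (integral_div_add_half_rnsq_sq_le hA)
  exact Kker_sq_mul_abs_sub_le hc.le hH N hμ (k 0) htail _ _ x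

theorem stmt10 (c K : ℝ) (hc : 0 < c) (hK : 1 ≤ K) :
    ∃ C : ℝ, ∀ H : ℝ → ℝ,
      (∀ y : ℝ, 0 ≤ y → 1 ≤ H y) →
      (∀ y ∈ Set.Ici (0:ℝ), DifferentiableWithinAt ℝ H (Set.Ici 0) y) →
      (∀ y ∈ Set.Icc (0:ℝ) (2 * c),
        |H y| ≤ K ∧ |derivWithin H (Set.Ici 0) y| ≤ K) →
      ∀ N : ℕ, 2 ≤ N → ∀ μ : ℝ, 0 ≤ μ →
      ∀ (n : ℕ) (k : Fin (n + 1) → ℤ × ℤ), (∀ i, k i ≠ 0) →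
        (∫ x : ℝ × ℝ,
            (Kker N ((N : ℝ) • x) (latR (k 0) - (N : ℝ) • x)) ^ 2 *
              |1 / (μ / (N : ℝ) ^ 2 +
                    Gam N (k 0) (∑ i, nsq (k i) - nsq (k 0)) x *
                      H (LN c N ((N : ℝ) ^ 2 *
                        Gam1 N μ (k 0) (∑ i, nsq (k i) - nsq (k 0)) x))) -
                1 / (Gam1 N μ (k 0) (∑ i, nsq (k i) - nsq (k 0)) x *
                      H (LN c N ((N : ℝ) ^ 2 *
                        Gam1 N μ (k 0) (∑ i, nsq (k i) - nsq (k 0)) x)))|) ≤ C :=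
  stmt10_general c K hc
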